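/- Assume the semigroup property for Kronecker coefficients. Fix partitions λ, μ of the same size and k ∈ ℕ. Suppose every point of M_k(s_{pλ} ∗ s_{pμ}) is dominance-closed in the sense that α ∈ M_k(s_{pλ}∗s_{pμ}) iff there is a partition θ ⪰ sort(α) with g(pλ, pμ, θ) > 0. Then the set ⋃_{p=1}^∞ (1/p) M_k(s_{pλ} ∗ s_{pμ}) ⊂ ℚ^k is convex (as a subset of ℚ^k): any rational convex combination of finitely many of its points again lies in the set. -/

import Mathlib

/-!
If partitions `θ₁ ⪰ sort(a)` and `θ₂ ⪰ sort(b)` witness `a ∈ M_p` and `b ∈ M_q`, the semigroup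
property makes `θ₁ + θ₂` a witness for `a + b ∈ M_{p+q}`: indeed
`θ₁ + θ₂ ⪰ sort(a) + sort(b) ⪰ sort(a + b)`, the last step because the `i` largest entries of
`a + b` sit at `i` positions where `a` and `b` contribute at most their own `i` largest entries.
So `p ↦ M_p` is a graded semigroup, and a rational convex combination
`(c/d)(a/p) + (e/f)(b/q)` equals `(cfq • a + edp • b) / (dfpq)`, a point of `M_{dfpq} / dfpq`.
-/

/-- A partition: a weakly decreasing list of positive integers. -/
def IsPartition (l : List ℕ) : Prop :=
  l.Pairwise (· ≥ ·) ∧ ∀ x ∈ l, 0 < x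

/-- Dominance order: `l` dominates `m` (all partial sums of `l` are at least those of `m`). -/
def Dominates (l m : List ℕ) : Prop :=
  ∀ i, (m.take i).sum ≤ (l.take i).sum

/-- A semistandard Young tableau of shape `l`, given as its list of rows:
rows weakly increase, columns strictly increase. -/
def IsSSYT (l : List ℕ) (T : List (List ℕ)) : Prop :=
  T.map List.length = l ∧
  (∀ r ∈ T, r.Pairwise (· ≤ ·)) ∧
  ∀ i j, j < (T.getD (i+1) []).length →
    (T.getD i []).getD j 0 < (T.getD (i+1) []).getD j 0

/-- The number of entries of the tableau `T` equal to `v`. -/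
def contentCount (T : List (List ℕ)) (v : ℕ) : ℕ :=
  (T.map fun r => r.count v).sum

/-- `T` has content `a` (a vector of multiplicities indexed by `Fin k`). -/
def hasContent (k : ℕ) (T : List (List ℕ)) (a : Fin k → ℕ) : Prop :=
  ∀ v : ℕ, contentCount T v = if h : v < k then a ⟨v, h⟩ else 0

/-- The weakly decreasing rearrangement of a list of naturals. -/
def sortDesc (l : List ℕ) : List ℕ :=
  ((l : Multiset ℕ).sort (· ≤ ·)).reverse

/-- Componentwise sum of two partitions (padding with zeros). -/
def addP (l m : List ℕ) : List ℕ :=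
  (List.range (max l.length m.length)).map fun i => l.getD i 0 + m.getD i 0

/-- The partition `p·l` with parts `p * l_i`. -/
def scaleP (p : ℕ) (l : List ℕ) : List ℕ := l.map (p * ·)

namespace List

theorem sum_take_eq_sum_range_getD {M : Type*} [AddCommMonoid M] (l : List M) (i : ℕ) :
    (l.take i).sum = ∑ j ∈ Finset.range i, l.getD j 0 := by
  induction l generalizing i with
  | nil => simp
  | cons a l ih =>
    cases i with
    | zero => simp
    | succ i => simp [Finset.sum_range_succ', ih, add_comm]

theorem sum_take_le_sum_take_cons {l : List ℕ} {a : ℕ} (ha : ∀ x ∈ l, x ≤ a) (j : ℕ) :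
    (l.take j).sum ≤ ((a :: l).take j).sum := by
  cases j with
  | zero => simp
  | succ j =>
    rw [take_succ_cons, sum_cons, take_add_one, sum_append, add_comm]
    gcongr
    cases h : l[j]? with
    | none => simp
    | some x => simpa using ha x (mem_of_getElem? h)

theorem Sublist.sum_le_sum_take_of_pairwise_ge {l m : List ℕ} (h : m <+ l)
    (hl : l.Pairwise (· ≥ ·)) : m.sum ≤ (l.take m.length).sum := by
  induction h with
  | slnil => simp
  | cons a _ ih =>
    have hs := pairwise_cons.1 hl
    exact (ih hs.2).trans (sum_take_le_sum_take_cons hs.1 _)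
  | cons_cons a _ ih => simpa using ih (pairwise_cons.1 hl).2

theorem Subperm.sum_le_sum_take_of_pairwise_ge {l m : List ℕ} (h : m <+~ l)
    (hl : l.Pairwise (· ≥ ·)) : m.sum ≤ (l.take m.length).sum := by
  obtain ⟨m', hp, hs⟩ := h
  rw [← hp.sum_eq, ← hp.length_eq]
  exact hs.sum_le_sum_take_of_pairwise_ge hl

end List

theorem IsPartition.getD_antitone {l : List ℕ} (hl : IsPartition l) : Antitone (l.getD · 0) := by
  intro i j hij
  show l.getD j 0 ≤ l.getD i 0
  rcases lt_or_ge j l.length with hj | hj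
  · rw [List.getD_eq_getElem _ _ hj, List.getD_eq_getElem _ _ (hij.trans_lt hj)]
    rcases hij.eq_or_lt with rfl | hlt
    · rfl
    · exact List.pairwise_iff_getElem.1 hl.1 _ _ _ hj hlt
  · rw [List.getD_eq_default _ _ hj]
    exact Nat.zero_le _

theorem getD_addP (l m : List ℕ) (j : ℕ) :
    (addP l m).getD j 0 = l.getD j 0 + m.getD j 0 := by
  rcases lt_or_ge j (max l.length m.length) with hj | hj
  · simp [addP, hj]
  · rw [List.getD_eq_default, List.getD_eq_default, List.getD_eq_default] <;> simp_all [addP]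

theorem sum_take_addP (l m : List ℕ) (i : ℕ) :
    ((addP l m).take i).sum = (l.take i).sum + (m.take i).sum := by
  simp only [List.sum_take_eq_sum_range_getD, getD_addP, Finset.sum_add_distrib]

theorem sum_addP (l m : List ℕ) : (addP l m).sum = l.sum + m.sum := by
  have := sum_take_addP l m (max l.length m.length)
  rwa [List.take_of_length_le (by simp [addP]), List.take_of_length_le (le_max_left _ _),
    List.take_of_length_le (le_max_right _ _)] at this

theorem IsPartition.addP {l m : List ℕ} (hl : IsPartition l) (hm : IsPartition m) :
    IsPartition (addP l m) := by
  refine ⟨?_, ?_⟩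
  · rw [_root_.addP, List.pairwise_map]
    exact List.pairwise_lt_range.imp fun hij =>
      add_le_add (hl.getD_antitone hij.le) (hm.getD_antitone hij.le)
  · simp only [_root_.addP, List.mem_map, List.mem_range, lt_max_iff]
    rintro _ ⟨i, hi | hi, rfl⟩
    · have := hl.2 _ (List.getElem_mem hi)
      rw [List.getD_eq_getElem _ _ hi]; omega
    · have := hm.2 _ (List.getElem_mem hi)
      rw [List.getD_eq_getElem _ _ hi]; omega

theorem IsPartition.scaleP {l : List ℕ} {p : ℕ} (hl : IsPartition l) (hp : 0 < p) :
    IsPartition (scaleP p l) := by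
  refine ⟨List.pairwise_map.2 (hl.1.imp fun h => Nat.mul_le_mul_left p h), ?_⟩
  simp only [_root_.scaleP, List.mem_map]
  rintro _ ⟨y, hy, rfl⟩
  exact Nat.mul_pos hp (hl.2 y hy)

theorem sum_scaleP (p : ℕ) (l : List ℕ) : (scaleP p l).sum = p * l.sum := by
  simpa [scaleP] using List.sum_map_mul_left l id p

theorem addP_scaleP (p q : ℕ) (l : List ℕ) :
    addP (scaleP p l) (scaleP q l) = scaleP (p + q) l := by
  apply List.ext_getElem
  · simp [addP, scaleP]
  · intro i _ hi
    simp only [scaleP, List.length_map] at hi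
    simp [addP, scaleP, List.getElem?_eq_getElem hi, add_mul]

theorem Dominates.addP {l₁ l₂ m₁ m₂ : List ℕ} (h₁ : Dominates l₁ m₁) (h₂ : Dominates l₂ m₂) :
    Dominates (addP l₁ l₂) (addP m₁ m₂) := fun i => by
  rw [sum_take_addP, sum_take_addP]
  exact add_le_add (h₁ i) (h₂ i)

theorem Dominates.trans {l m r : List ℕ} (hlm : Dominates l m) (hmr : Dominates m r) :
    Dominates l r := fun i => (hmr i).trans (hlm i)

section SortDesc

theorem sortDesc_pairwise (l : List ℕ) : (sortDesc l).Pairwise (· ≥ ·) :=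
  List.pairwise_reverse.2 (Multiset.pairwise_sort _ _)

theorem sortDesc_perm (l : List ℕ) : (sortDesc l).Perm l :=
  (List.reverse_perm _).trans (Multiset.coe_eq_coe.1 (Multiset.sort_eq _ _))

variable {k : ℕ}

theorem sum_le_sum_take_sortDesc (f : Fin k → ℕ) {S : Finset (Fin k)} {i : ℕ}
    (hS : S.card ≤ i) : ∑ j ∈ S, f j ≤ ((sortDesc (List.ofFn f)).take i).sum := by
  have hsub : (S.toList.map f).Subperm (sortDesc (List.ofFn f)) := by
    rw [(sortDesc_perm _).subperm_left, List.ofFn_eq_map]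
    obtain ⟨L, hL, hLsub⟩ :=
      List.subperm_of_subset S.nodup_toList fun x _ => List.mem_finRange x
    exact ⟨L.map f, hL.map f, hLsub.map f⟩
  calc ∑ j ∈ S, f j = (S.toList.map f).sum := (Finset.sum_map_toList S f).symm
    _ ≤ ((sortDesc (List.ofFn f)).take (S.toList.map f).length).sum :=
      hsub.sum_le_sum_take_of_pairwise_ge (sortDesc_pairwise _)
    _ ≤ _ := List.monotone_sum_take _ (by simpa using hS)

theorem exists_sortDesc_ofFn_eq_map (f : Fin k → ℕ) :
    ∃ L : List (Fin k), L.Nodup ∧ sortDesc (List.ofFn f) = L.map f := by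
  set L := (List.finRange k).mergeSort fun x y => decide (f y ≤ f x)
  have hperm : L.Perm (List.finRange k) := List.mergeSort_perm _ _
  refine ⟨L, hperm.nodup_iff.2 (List.nodup_finRange k),
    List.Perm.eq_of_pairwise (fun _ _ _ _ hab hba => le_antisymm hba hab)
      (sortDesc_pairwise _) ?_ ?_⟩
  · have := List.pairwise_mergeSort (le := fun x y => decide (f y ≤ f x))
      (fun _ _ _ hab hbc => by simp only [decide_eq_true_eq] at *; omega)
      (fun _ _ => by simp only [Bool.or_eq_true, decide_eq_true_eq]; omega) (List.finRange k)
    exact List.pairwise_map.2 (by simpa using this)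
  · rw [List.ofFn_eq_map] at *
    exact (sortDesc_perm _).trans (hperm.map f).symm

theorem exists_card_le_sum_take_sortDesc_eq (f : Fin k → ℕ) (i : ℕ) :
    ∃ S : Finset (Fin k), S.card ≤ i ∧
      ((sortDesc (List.ofFn f)).take i).sum = ∑ j ∈ S, f j := by
  obtain ⟨L, hL, hsort⟩ := exists_sortDesc_ofFn_eq_map f
  refine ⟨(L.take i).toFinset, (List.toFinset_card_le _).trans (List.length_take_le _ _), ?_⟩
  rw [hsort, ← List.map_take, List.sum_toFinset _ (hL.sublist (List.take_sublist _ _))]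

theorem dominates_addP_sortDesc (a b : Fin k → ℕ) :
    Dominates (addP (sortDesc (List.ofFn a)) (sortDesc (List.ofFn b)))
      (sortDesc (List.ofFn (a + b))) := fun i => by
  obtain ⟨S, hS, hsum⟩ := exists_card_le_sum_take_sortDesc_eq (a + b) i
  rw [hsum, sum_take_addP]
  simp only [Pi.add_apply, Finset.sum_add_distrib]
  exact add_le_add (sum_le_sum_take_sortDesc a hS) (sum_le_sum_take_sortDesc b hS)

end SortDesc

theorem Rat.exists_eq_natCast_div_natCast_of_pos {s : ℚ} (hs : 0 < s) :
    ∃ c d : ℕ, 0 < c ∧ 0 < d ∧ s = c / d := by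
  have hnum : 0 < s.num := Rat.num_pos.2 hs
  refine ⟨s.num.toNat, s.den, by omega, s.den_pos, ?_⟩
  have hcast : ((s.num.toNat : ℕ) : ℚ) = s.num := by exact_mod_cast Int.toNat_of_nonneg hnum.le
  rw [hcast, Rat.num_div_den]

section GradedSemigroup

variable {ι : Type*}

/-- The set `⋃_{p ≥ 1} (1/p) M_p`. -/
def rescaledUnion (M : ℕ → Set (ι → ℕ)) : Set (ι → ℚ) :=
  {θ | ∃ p : ℕ, 0 < p ∧ ∃ a ∈ M p, θ = fun i => (a i : ℚ) / p}

variable {M : ℕ → Set (ι → ℕ)}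

theorem nsmul_mem_of_add_mem
    (hadd : ∀ ⦃p q : ℕ⦄ ⦃a b : ι → ℕ⦄, 0 < p → 0 < q → a ∈ M p → b ∈ M q → a + b ∈ M (p + q))
    {p : ℕ} {a : ι → ℕ} (hp : 0 < p) (ha : a ∈ M p) {m : ℕ}
    (hm : 0 < m) : m • a ∈ M (m * p) := by
  induction m, hm using Nat.le_induction with
  | base => simpa using ha
  | succ m hm ih =>
    rw [succ_nsmul, add_mul, one_mul]
    exact hadd (by positivity) hp ih ha

theorem convex_rescaledUnion
    (hadd : ∀ ⦃p q : ℕ⦄ ⦃a b : ι → ℕ⦄, 0 < p → 0 < q → a ∈ M p → b ∈ M q → a + b ∈ M (p + q)) :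
    Convex ℚ (rescaledUnion M) := by
  refine convex_iff_openSegment_subset.2 ?_
  rintro _ ⟨p, hp, a, ha, rfl⟩ _ ⟨q, hq, b, hb, rfl⟩ _ ⟨s, t, hs, ht, hst, rfl⟩
  obtain ⟨c, d, hc, hd, rfl⟩ := Rat.exists_eq_natCast_div_natCast_of_pos hs
  obtain ⟨e, f, he, hf, rfl⟩ := Rat.exists_eq_natCast_div_natCast_of_pos ht
  have hden : c * f + e * d = d * f := by
    have : (c * f + e * d : ℚ) = d * f := by
      field_simp at hst
      linarith
    exact_mod_cast this
  have hmem := hadd (by positivity) (by positivity)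
    (nsmul_mem_of_add_mem hadd hp ha (m := c * f * q) (by positivity))
    (nsmul_mem_of_add_mem hadd hq hb (m := e * d * p) (by positivity))
  have hgrade : c * f * q * p + e * d * p * q = d * f * p * q := by
    rw [← hden]; ring
  refine ⟨d * f * p * q, by positivity, _, hgrade ▸ hmem, funext fun i => ?_⟩
  simp only [Pi.add_apply, Pi.smul_apply, smul_eq_mul]
  push_cast
  field_simp

end GradedSemigroup

/-- Assume the semigroup property for the Kronecker coefficients `g`.
Fix partitions `lam, mu ⊢ n` and `k ∈ ℕ`.  Suppose the monomial supports
`M p = M_k(s_{p·lam} ∗ s_{p·mu})` are dominance-closed: `a ∈ M p` iff there is a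
partition `θ ⪰ sort(a)` of `p·n` with `g(p·lam, p·mu, θ) > 0`.  Then
`⋃_{p≥1} (1/p) · M p ⊆ ℚ^k` is convex. -/
theorem limit_support_convex (n k : ℕ) (lam mu : List ℕ)
    (hlam : IsPartition lam) (hmu : IsPartition mu)
    (hlams : lam.sum = n) (hmus : mu.sum = n)
    (g : List ℕ → List ℕ → List ℕ → ℕ)
    (hsemi : ∀ a1 b1 c1 a2 b2 c2 : List ℕ,
      IsPartition a1 → IsPartition b1 → IsPartition c1 →
      IsPartition a2 → IsPartition b2 → IsPartition c2 →
      a1.sum = b1.sum → b1.sum = c1.sum → a2.sum = b2.sum → b2.sum = c2.sum →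
      0 < g a1 b1 c1 → 0 < g a2 b2 c2 →
      0 < g (addP a1 a2) (addP b1 b2) (addP c1 c2))
    (M : ℕ → Set (Fin k → ℕ))
    (hM : ∀ (p : ℕ) (a : Fin k → ℕ), a ∈ M p ↔
      ∃ θ : List ℕ, IsPartition θ ∧ θ.sum = p * n ∧
        Dominates θ (sortDesc (List.ofFn a)) ∧ 0 < g (scaleP p lam) (scaleP p mu) θ) :
    Convex ℚ {θ : Fin k → ℚ | ∃ p : ℕ, 0 < p ∧
      ∃ a : Fin k → ℕ, a ∈ M p ∧ θ = fun i => (a i : ℚ) / (p : ℚ)} := by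
  refine convex_rescaledUnion fun p q a b hp hq ha hb => ?_
  rw [hM] at ha hb ⊢
  obtain ⟨θ₁, hθ₁, hsum₁, hdom₁, hg₁⟩ := ha
  obtain ⟨θ₂, hθ₂, hsum₂, hdom₂, hg₂⟩ := hb
  refine ⟨addP θ₁ θ₂, hθ₁.addP hθ₂, by rw [sum_addP, hsum₁, hsum₂, add_mul],
    (hdom₁.addP hdom₂).trans (dominates_addP_sortDesc a b), ?_⟩
  rw [← addP_scaleP, ← addP_scaleP]
  exact hsemi _ _ _ _ _ _ (hlam.scaleP hp) (hmu.scaleP hp) hθ₁ (hlam.scaleP hq) (hmu.scaleP hq) hθ₂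
    (by rw [sum_scaleP, sum_scaleP, hlams, hmus]) (by rw [sum_scaleP, hmus, hsum₁])
    (by rw [sum_scaleP, sum_scaleP, hlams, hmus]) (by rw [sum_scaleP, hmus, hsum₂]) hg₁ hg₂
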